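/- Let p, q ∈ ℝ², r ≥ 0, with guide complements g⁺, g⁻. Then [L(p,g⁺;r) ∩ L(q,g⁻;r)] ∪ [L(p,g⁻;r) ∩ L(q,g⁺;r)] ⊆ L(p,q;r). -/
import Mathlib


noncomputable def taxi (a b : ℝ × ℝ) : ℝ := |a.1 - b.1| + |a.2 - b.2|

noncomputable def gplus (p q : ℝ × ℝ) : ℝ × ℝ :=
  ((p.1 - p.2 + q.1 + q.2) / 2, (q.1 + q.2 - p.1 + p.2) / 2)

noncomputable def gminus (p q : ℝ × ℝ) : ℝ × ℝ :=
  ((p.1 + p.2 + q.1 - q.2) / 2, (p.1 + p.2 - q.1 + q.2) / 2)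

def Lset (a b : ℝ × ℝ) (r : ℝ) : Set (ℝ × ℝ) := {x | taxi x a * taxi x b < r ^ 2}

def Kset (a b : ℝ × ℝ) (r : ℝ) : Set (ℝ × ℝ) := {x | taxi x a * taxi x b = r ^ 2}

lemma taxi_eq (a b : ℝ × ℝ) :
    taxi a b = max |a.1 + a.2 - (b.1 + b.2)| |a.1 - a.2 - (b.1 - b.2)| := by
  unfold taxi
  rcases abs_cases (a.1 - b.1) with ⟨h1, h1'⟩ | ⟨h1, h1'⟩ <;>
    rcases abs_cases (a.2 - b.2) with ⟨h2, h2'⟩ | ⟨h2, h2'⟩ <;>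
    rcases abs_cases (a.1 + a.2 - (b.1 + b.2)) with ⟨h3, h3'⟩ | ⟨h3, h3'⟩ <;>
    rcases abs_cases (a.1 - a.2 - (b.1 - b.2)) with ⟨h4, h4'⟩ | ⟨h4, h4'⟩ <;>
    rcases max_cases |a.1 + a.2 - (b.1 + b.2)| |a.1 - a.2 - (b.1 - b.2)| with ⟨h5, h5'⟩ | ⟨h5, h5'⟩ <;>
    linarith

lemma key (a b c d r : ℝ)
    (h1 : max a c * max b c < r ^ 2) (h2 : max a d * max b d < r ^ 2)
    (ha : 0 ≤ a) (hb : 0 ≤ b) :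
    max a c * max b d < r ^ 2 := by
  rcases le_total c d with h | h
  · calc max a c * max b d ≤ max a d * max b d := by
          apply mul_le_mul_of_nonneg_right (max_le_max le_rfl h) (le_trans hb (le_max_left _ _))
        _ < r ^ 2 := h2
  · calc max a c * max b d ≤ max a c * max b c := by
          apply mul_le_mul_of_nonneg_left (max_le_max le_rfl h) (le_trans ha (le_max_left _ _))
        _ < r ^ 2 := h1

theorem mixed_subset_L (p q : ℝ × ℝ) (r : ℝ) (hr : 0 ≤ r) :
    (Lset p (gplus p q) r ∩ Lset q (gminus p q) r) ∪
      (Lset p (gminus p q) r ∩ Lset q (gplus p q) r) ⊆ Lset p q r := by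
  have e3 : ∀ x : ℝ × ℝ, taxi x (gplus p q)
      = max |x.1 + x.2 - (q.1 + q.2)| |x.1 - x.2 - (p.1 - p.2)| := by
    intro x
    rw [taxi_eq]
    congr 2 <;> · simp only [gplus] ; ring
  have e4 : ∀ x : ℝ × ℝ, taxi x (gminus p q)
      = max |x.1 + x.2 - (p.1 + p.2)| |x.1 - x.2 - (q.1 - q.2)| := by
    intro x
    rw [taxi_eq]
    congr 2 <;> · simp only [gminus] ; ring
  rintro x (⟨h1, h2⟩ | ⟨h1, h2⟩) <;>
    simp only [Lset, Set.mem_setOf_eq, taxi_eq x p, taxi_eq x q, e3, e4] at h1 h2 ⊢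
  · exact key _ _ _ _ _ h1 (by rw [mul_comm] at h2; exact h2) (abs_nonneg _) (abs_nonneg _)
  · set A := |x.1 + x.2 - (p.1 + p.2)|
    set B := |x.1 + x.2 - (q.1 + q.2)|
    set C := |x.1 - x.2 - (p.1 - p.2)|
    set D := |x.1 - x.2 - (q.1 - q.2)|
    have h1' : max C A * max D A < r ^ 2 := by rw [max_comm C A, max_comm D A]; exact h1
    have h2' : max C B * max D B < r ^ 2 := by
      rw [max_comm C B, max_comm D B, mul_comm]; exact h2
    have := key C D A B r h1' h2' (abs_nonneg _) (abs_nonneg _)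
    rw [max_comm C A, max_comm D B] at this
    exact this
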